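/- Let a group G act on a probability space (X, μ) by measure-preserving transformations, and let U ⊆ X be measurable with μ(U) > 0. Suppose that for every g ∈ G, either μ(gU Δ U) = 0 or μ(gU ∩ U) = 0. Then H = {g ∈ G : μ(gU Δ U) = 0} is a subgroup of G, and its index satisfies [G : H] ≤ 1/μ(U); in particular H has finite index. -/

import Mathlib

open Function MeasureTheory
open scoped Pointwise

/-!
The subgroup in question is the a.e. stabilizer `MulAction.aestabilizer G μ U`. If `g⁻¹ h` is
not in it, the dichotomy makes `g • U` and `h • U` a.e. disjoint; so the translates of `U` by
representatives of the cosets are a.e. disjoint sets of measure `μ U` each, and at most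
`1 / μ U` of them fit into a probability space.
-/

theorem natCard_mul_le_measure_univ {ι α : Type*} [Finite ι] [MeasurableSpace α]
    {μ : Measure α} {f : ι → Set α} {m : ENNReal} (hmeas : ∀ i, NullMeasurableSet (f i) μ)
    (hdisj : Pairwise (AEDisjoint μ on f)) (hm : ∀ i, μ (f i) = m) :
    Nat.card ι * m ≤ μ Set.univ := by
  cases nonempty_fintype ι
  calc Nat.card ι * m = ∑' i, μ (f i) := by simp [hm, tsum_fintype, Nat.card_eq_fintype_card]
    _ = μ (⋃ i, f i) := (measure_iUnion₀ hdisj hmeas).symm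
    _ ≤ μ Set.univ := measure_mono (Set.subset_univ _)

namespace MulAction

variable {G α : Type*} [Group G] [MulAction G α] [MeasurableSpace α] {μ : Measure α}
  [SMulInvariantMeasure G α μ] {s : Set α}

theorem pairwise_aedisjoint_out_smul
    (hdisj : ∀ g ∉ aestabilizer G μ s, AEDisjoint μ (g • s) s) :
    Pairwise (AEDisjoint μ on fun q : G ⧸ aestabilizer G μ s ↦ q.out • s) := by
  intro q q' hne
  have hout : q.out⁻¹ * q'.out ∉ aestabilizer G μ s := fun h ↦
    hne (by rw [← q.out_eq', ← q'.out_eq']; exact QuotientGroup.eq.mpr h)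
  show μ (q.out • s ∩ q'.out • s) = 0
  rw [← smul_inv_smul q.out (q'.out • s), ← Set.smul_set_inter, measure_smul, smul_smul,
    Set.inter_comm]
  exact hdisj _ hout

variable [MeasurableConstSMul G α]

theorem index_aestabilizer_mul_le (hs : NullMeasurableSet s μ)
    (hdisj : ∀ g ∉ aestabilizer G μ s, AEDisjoint μ (g • s) s) :
    (aestabilizer G μ s).index * μ s ≤ μ Set.univ := by
  rcases finite_or_infinite (G ⧸ aestabilizer G μ s) with hfin | hinf
  · rw [Subgroup.index]
    exact natCard_mul_le_measure_univ (fun q ↦ hs.smul q.out) (pairwise_aedisjoint_out_smul hdisj)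
      (fun q ↦ measure_smul μ q.out s)
  · simp [Subgroup.index_eq_zero_iff_infinite.mpr hinf]

theorem finiteIndex_aestabilizer [IsFiniteMeasure μ] (hs : NullMeasurableSet s μ)
    (hs₀ : μ s ≠ 0) (hdisj : ∀ g ∉ aestabilizer G μ s, AEDisjoint μ (g • s) s) :
    (aestabilizer G μ s).FiniteIndex := by
  have hfin := Measure.finite_const_le_meas_of_disjoint_iUnion₀ μ (pos_iff_ne_zero.mpr hs₀)
    (fun q : G ⧸ aestabilizer G μ s ↦ hs.smul q.out) (pairwise_aedisjoint_out_smul hdisj)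
    (measure_ne_top μ _)
  simp only [measure_smul, le_refl, Set.ofPred_true, Set.finite_univ_iff] at hfin
  exact Subgroup.finiteIndex_of_finite_quotient

end MulAction

open MulAction in
theorem stmt_16 {G X : Type*} [Group G] [MeasurableSpace X] [MulAction G X]
    (μ : Measure X) [IsProbabilityMeasure μ]
    (hmp : ∀ g : G, MeasurePreserving (fun x => g • x) μ μ)
    (U : Set X) (hU : MeasurableSet U) (hUpos : 0 < μ U)
    (hdich : ∀ g : G, μ (symmDiff (g • U) U) = 0 ∨ μ ((g • U) ∩ U) = 0) :
    ∃ H : Subgroup G, (H : Set G) = {g : G | μ (symmDiff (g • U) U) = 0} ∧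
      H.index ≠ 0 ∧ (H.index : ENNReal) ≤ 1 / μ U := by
  have : MeasurableConstSMul G X := ⟨fun g ↦ (hmp g).measurable⟩
  have : SMulInvariantMeasure G X μ :=
    ⟨fun g _ hs ↦ (hmp g).measure_preimage hs.nullMeasurableSet⟩
  have hdisj : ∀ g ∉ aestabilizer G μ U, AEDisjoint μ (g • U) U := fun g hg ↦
    (hdich g).resolve_left (by rwa [measure_symmDiff_eq_zero_iff])
  have := finiteIndex_aestabilizer hU.nullMeasurableSet hUpos.ne' hdisj
  refine ⟨aestabilizer G μ U, by ext; simp [measure_symmDiff_eq_zero_iff],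
    Subgroup.FiniteIndex.index_ne_zero, ?_⟩
  rw [ENNReal.le_div_iff_mul_le (.inl hUpos.ne') (.inl (measure_ne_top μ U)),
    ← measure_univ (μ := μ)]
  exact index_aestabilizer_mul_le hU.nullMeasurableSet hdisj
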